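/- arXiv:2404.10158 — 2 statements merged into one kernel-verified Lean document; each statement's English description precedes it below -/
import Mathlib

section
/- Let M be a Φ-function on Ω_T = (0,T) × Ω and let u ∈ W^{1,x}L_M(Ω_T), so that there is λ₁ > 0 with ∫_{Ω_T} M(z, |D^α u(z)|/λ₁) dz < ∞ for all |α| ≤ 1. Let χ ∈ C_0^∞(ℝ^{N+1}) with χ(z)=1 for |z|≤1, χ(z)=0 for |z|≥2, and |D^α χ| ≤ c for |α| ≤ 1 with c ≥ 1, and set χ_n(z) = χ(z/n), u_n = χ_n u. Then with λ₂ = max{8cλ₁, 4λ₁}, one has lim_{n→∞} Σ_{|α|≤1} ∫_{Ω_T} M(z, |D^α u(z) − D^α u_n(z)|/λ₂) dz = 0; i.e. u can be approximated modularly in W^{1,x}L_M(Ω_T) by functions with compact support in closure(Ω_T). -/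
open MeasureTheory Set Filter Topology

private lemma convexOn_mono_of_zero {f : ℝ → ℝ} (hf : ConvexOn ℝ (Set.Ici 0) f)
    (h0 : f 0 = 0) (hnn : ∀ s, 0 ≤ f s) {s t : ℝ} (hs : 0 ≤ s) (hst : s ≤ t) :
    f s ≤ f t := by
  rcases eq_or_lt_of_le hst with rfl | hlt
  · exact le_rfl
  have ht : 0 < t := lt_of_le_of_lt hs hlt
  have hd1 : s / t ≤ 1 := (div_le_one ht).mpr hst
  have h2 := hf.2 (Set.self_mem_Ici) (Set.mem_Ici.mpr ht.le)
    (sub_nonneg.mpr hd1) (div_nonneg hs ht.le) (by ring)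
  have h1 : (1 - s/t) • (0:ℝ) + (s/t) • t = s := by
    rw [smul_zero, zero_add, smul_eq_mul, div_mul_cancel₀ s ht.ne']
  rw [h1] at h2
  calc f s ≤ (1 - s/t) • f 0 + (s/t) • f t := h2
    _ = (s/t) * f t := by rw [h0]; simp [smul_eq_mul]
    _ ≤ f t := mul_le_of_le_one_left (hnn t) hd1

private lemma fderiv_zero_of_norm_lt {E : Type*} [NormedAddCommGroup E] [NormedSpace ℝ E]
    (χ : E → ℝ) (hχ1 : ∀ z, ‖z‖ ≤ 1 → χ z = 1) {w : E} (hw : ‖w‖ < 1) :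
    fderiv ℝ χ w = 0 := by
  have hev : χ =ᶠ[𝓝 w] fun _ => (1:ℝ) := by
    filter_upwards [Metric.isOpen_ball.mem_nhds (x := w) (s := Metric.ball 0 1)
      (mem_ball_zero_iff.mpr hw)] with a ha
    exact hχ1 a (mem_ball_zero_iff.mp ha).le
  rw [hev.fderiv_eq, fderiv_fun_const]
  rfl

set_option maxHeartbeats 1000000 in
/-- Approximation, modularly in `W^{1,x}L_M(Ω_T)`, of a function by cutoffs
`u_n = χ_n u` with compact support in the closure of `Ω_T`. -/
theorem cutoff_modular_approx (N : ℕ) (T : ℝ) (hT : 0 < T)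
    (Ω : Set (Fin N → ℝ)) (hΩ : IsOpen Ω)
    (M : ℝ × (Fin N → ℝ) → ℝ → ℝ)
    (hMmeas : Measurable (Function.uncurry M))
    (hphi : ∀ z, ConvexOn ℝ (Ici 0) (M z) ∧ M z 0 = 0 ∧ (∀ s : ℝ, 0 ≤ M z s))
    (u : ℝ × (Fin N → ℝ) → ℝ) (G : ℝ × (Fin N → ℝ) → Fin N → ℝ)
    (hu : Measurable u) (hG : Measurable G)
    -- `G` is the distributional spatial gradient of `u` on `Ω_T`
    (hgrad : ∀ φ : ℝ × (Fin N → ℝ) → ℝ, ContDiff ℝ (⊤ : ℕ∞) φ → HasCompactSupport φ →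
      tsupport φ ⊆ Ioo (0:ℝ) T ×ˢ Ω → ∀ l : Fin N,
      (∫ z in Ioo (0:ℝ) T ×ˢ Ω, u z * fderiv ℝ φ z (0, Pi.single l 1)) =
        - ∫ z in Ioo (0:ℝ) T ×ˢ Ω, G z l * φ z)
    (l₁ : ℝ) (hl₁ : 0 < l₁)
    (hmod0 : IntegrableOn (fun z => M z (|u z| / l₁)) (Ioo (0:ℝ) T ×ˢ Ω))
    (hmodl : ∀ l : Fin N, IntegrableOn (fun z => M z (|G z l| / l₁)) (Ioo (0:ℝ) T ×ˢ Ω))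
    (χ : ℝ × (Fin N → ℝ) → ℝ) (hχs : ContDiff ℝ (⊤ : ℕ∞) χ) (hχc : HasCompactSupport χ)
    (hχ1 : ∀ z, ‖z‖ ≤ 1 → χ z = 1) (hχ0 : ∀ z, 2 ≤ ‖z‖ → χ z = 0)
    (c : ℝ) (hc : 1 ≤ c) (hχb : ∀ z, |χ z| ≤ c ∧ ‖fderiv ℝ χ z‖ ≤ c) :
    Tendsto (fun n : ℕ =>
      (∫ z in Ioo (0:ℝ) T ×ˢ Ω,
        M z (|u z - χ ((n:ℝ)⁻¹ • z) * u z| / max (8 * c * l₁) (4 * l₁))) +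
      ∑ l : Fin N, ∫ z in Ioo (0:ℝ) T ×ˢ Ω,
        M z (|G z l - (χ ((n:ℝ)⁻¹ • z) * G z l +
          (n:ℝ)⁻¹ * u z * fderiv ℝ χ ((n:ℝ)⁻¹ • z) (0, Pi.single l 1))| /
            max (8 * c * l₁) (4 * l₁)))
      atTop (𝓝 0) := by
  classical
  set Q : Set (ℝ × (Fin N → ℝ)) := Ioo (0:ℝ) T ×ˢ Ω with hQdef
  set L : ℝ := max (8 * c * l₁) (4 * l₁) with hLdef
  have hc0 : (0:ℝ) < c := lt_of_lt_of_le one_pos hc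
  have hL8 : 8 * c * l₁ ≤ L := le_max_left _ _
  have hLpos : 0 < L := lt_of_lt_of_le (by positivity) hL8
  have hM0 : ∀ z, M z 0 = 0 := fun z => (hphi z).2.1
  have hMnn : ∀ z s, 0 ≤ M z s := fun z => (hphi z).2.2
  have hmono : ∀ z : ℝ × (Fin N → ℝ), ∀ {s t : ℝ}, 0 ≤ s → s ≤ t → M z s ≤ M z t :=
    fun z _ _ hs hst => convexOn_mono_of_zero (hphi z).1 (hM0 z) (hMnn z) hs hst
  have hninv : ∀ n : ℕ, ((n:ℝ))⁻¹ ≤ 1 := by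
    intro n
    rcases Nat.eq_zero_or_pos n with rfl | hn
    · simp
    · rw [inv_le_one_iff₀]; right; exact_mod_cast hn
  have hninv0 : ∀ n : ℕ, (0:ℝ) ≤ ((n:ℝ))⁻¹ := fun n => by positivity
  -- eventual vanishing of the cutoff corrections, for each fixed z
  have hev0 : ∀ z : ℝ × (Fin N → ℝ), ∀ᶠ n : ℕ in atTop,
      χ ((n:ℝ)⁻¹ • z) = 1 ∧ fderiv ℝ χ ((n:ℝ)⁻¹ • z) = 0 := by
    intro z
    obtain ⟨n₀, hn₀⟩ := exists_nat_ge ‖z‖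
    filter_upwards [eventually_ge_atTop (n₀+1)] with n hn
    have hnR : (n₀:ℝ) < (n:ℝ) := by exact_mod_cast Nat.lt_of_succ_le hn
    have hnpos : (0:ℝ) < (n:ℝ) := lt_of_le_of_lt (Nat.cast_nonneg n₀) hnR
    have hzn : ‖z‖ < (n:ℝ) := lt_of_le_of_lt hn₀ hnR
    have hlt : ‖(n:ℝ)⁻¹ • z‖ < 1 := by
      rw [norm_smul, norm_inv, Real.norm_natCast]
      have := (div_lt_one hnpos).mpr hzn
      simpa [div_eq_inv_mul] using this
    exact ⟨hχ1 _ hlt.le, fderiv_zero_of_norm_lt χ hχ1 hlt⟩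
  have hmeasM : ∀ g : ℝ × (Fin N → ℝ) → ℝ, Measurable g →
      Measurable fun z => M z (g z) :=
    fun g hg => hMmeas.comp (measurable_id.prodMk hg)
  -- zeroth-order term
  have h1 : Tendsto (fun n : ℕ => ∫ z in Q, M z (|u z - χ ((n:ℝ)⁻¹ • z) * u z| / L))
      atTop (𝓝 0) := by
    have hDC := tendsto_integral_of_dominated_convergence
      (μ := volume.restrict Q)
      (F := fun (n : ℕ) z => M z (|u z - χ ((n:ℝ)⁻¹ • z) * u z| / L))
      (f := fun _ => (0:ℝ)) (bound := fun z => M z (|u z| / l₁)) ?_ ?_ ?_ ?_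
    · simpa using hDC
    · intro n
      have hχn : Measurable fun z : ℝ × (Fin N → ℝ) => χ ((n:ℝ)⁻¹ • z) :=
        (hχs.continuous.comp (continuous_const_smul _)).measurable
      exact (hmeasM _ (((hu.sub (hχn.mul hu)).abs).div_const _)).aestronglyMeasurable
    · exact hmod0
    · intro n
      refine Eventually.of_forall fun z => ?_
      rw [Real.norm_eq_abs, abs_of_nonneg (hMnn _ _)]
      refine hmono z (by positivity) ?_
      rw [div_le_div_iff₀ hLpos hl₁]
      have hb : |u z - χ ((n:ℝ)⁻¹ • z) * u z| ≤ 2*c*|u z| := by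
        have heq : u z - χ ((n:ℝ)⁻¹ • z) * u z = (1 - χ ((n:ℝ)⁻¹ • z)) * u z := by ring
        rw [heq, abs_mul]
        have h1c : |1 - χ ((n:ℝ)⁻¹ • z)| ≤ 2*c := by
          have h := (hχb ((n:ℝ)⁻¹ • z)).1
          calc |1 - χ ((n:ℝ)⁻¹ • z)| ≤ |(1:ℝ)| + |χ ((n:ℝ)⁻¹ • z)| := abs_sub _ _
            _ ≤ 1 + c := by rw [abs_one]; linarith
            _ ≤ 2*c := by linarith
        exact mul_le_mul_of_nonneg_right h1c (abs_nonneg _) |>.trans le_rfl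
      nlinarith [abs_nonneg (u z), mul_le_mul_of_nonneg_left hL8 (abs_nonneg (u z)),
        mul_le_mul_of_nonneg_right hb hl₁.le,
        mul_nonneg (mul_nonneg hc0.le (abs_nonneg (u z))) hl₁.le]
    · refine Eventually.of_forall fun z => ?_
      refine tendsto_const_nhds.congr' ?_
      filter_upwards [hev0 z] with n hn
      simp [hn.1, hM0]
  -- first-order terms
  have h2 : ∀ l : Fin N, Tendsto (fun n : ℕ => ∫ z in Q,
      M z (|G z l - (χ ((n:ℝ)⁻¹ • z) * G z l +
        (n:ℝ)⁻¹ * u z * fderiv ℝ χ ((n:ℝ)⁻¹ • z) (0, Pi.single l 1))| / L))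
      atTop (𝓝 0) := by
    intro l
    have hGl : Measurable fun z => G z l := (measurable_pi_apply l).comp hG
    have hDC := tendsto_integral_of_dominated_convergence
      (μ := volume.restrict Q)
      (F := fun (n : ℕ) z => M z (|G z l - (χ ((n:ℝ)⁻¹ • z) * G z l +
        (n:ℝ)⁻¹ * u z * fderiv ℝ χ ((n:ℝ)⁻¹ • z) (0, Pi.single l 1))| / L))
      (f := fun _ => (0:ℝ))
      (bound := fun z => 1/2 * M z (|G z l| / l₁) + 1/2 * M z (|u z| / l₁)) ?_ ?_ ?_ ?_
    · simpa using hDC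
    · intro n
      have hχn : Measurable fun z : ℝ × (Fin N → ℝ) => χ ((n:ℝ)⁻¹ • z) :=
        (hχs.continuous.comp (continuous_const_smul _)).measurable
      have hfd : Measurable fun z : ℝ × (Fin N → ℝ) =>
          fderiv ℝ χ ((n:ℝ)⁻¹ • z) (0, Pi.single l 1) :=
        (((hχs.continuous_fderiv (by simp)).comp (continuous_const_smul _)).clm_apply
          continuous_const).measurable
      exact (hmeasM _ ((hGl.sub ((hχn.mul hGl).add
        ((hu.const_mul _).mul hfd))).abs.div_const _)).aestronglyMeasurable
    · exact (((hmodl l).const_mul (1/2)).add (hmod0.const_mul (1/2)))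
    · intro n
      refine Eventually.of_forall fun z => ?_
      rw [Real.norm_eq_abs, abs_of_nonneg (hMnn _ _)]
      set w := (n:ℝ)⁻¹ • z with hw
      set D := fderiv ℝ χ w (0, Pi.single l 1) with hD
      have hGl0 : (0:ℝ) ≤ |G z l| := abs_nonneg _
      have hu0 : (0:ℝ) ≤ |u z| := abs_nonneg _
      have hDb : |D| ≤ c := by
        calc |D| ≤ ‖fderiv ℝ χ w‖ * ‖((0:ℝ), (Pi.single l 1 : Fin N → ℝ))‖ :=
            (fderiv ℝ χ w).le_opNorm _
          _ ≤ c * 1 := by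
            refine mul_le_mul (hχb w).2 ?_ (norm_nonneg _) hc0.le
            rw [Prod.norm_def]; simp [Pi.norm_single]
          _ = c := mul_one c
      have hexpr : |G z l - (χ w * G z l + (n:ℝ)⁻¹ * u z * D)| ≤ 2*c*|G z l| + c*|u z| := by
        have heq : G z l - (χ w * G z l + (n:ℝ)⁻¹ * u z * D)
            = (1 - χ w) * G z l + -((n:ℝ)⁻¹ * u z * D) := by ring
        rw [heq]
        refine (abs_add_le _ _).trans ?_
        rw [abs_neg, abs_mul, abs_mul, abs_mul]
        have h1c : |1 - χ w| ≤ 2*c := by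
          have h := (hχb w).1
          calc |1 - χ w| ≤ |(1:ℝ)| + |χ w| := abs_sub _ _
            _ ≤ 1 + c := by rw [abs_one]; linarith
            _ ≤ 2*c := by linarith
        have hA : |1 - χ w| * |G z l| ≤ 2*c*|G z l| :=
          mul_le_mul_of_nonneg_right h1c hGl0
        have hB : |((n:ℝ))⁻¹| * |u z| * |D| ≤ c * |u z| := by
          have hn1 : |((n:ℝ))⁻¹| ≤ 1 := by
            rw [abs_of_nonneg (hninv0 n)]; exact hninv n
          nlinarith [mul_nonneg (sub_nonneg.mpr hn1) (mul_nonneg hu0 (abs_nonneg D)),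
            mul_nonneg hu0 (sub_nonneg.mpr hDb), abs_nonneg ((n:ℝ))⁻¹, abs_nonneg D]
        linarith
      have hs_le : |G z l - (χ w * G z l + (n:ℝ)⁻¹ * u z * D)| / L
          ≤ 1/2 * (|G z l| / l₁) + 1/2 * (|u z| / l₁) := by
        rw [div_le_iff₀ hLpos]
        set A := |G z l| / l₁ with hA
        set B := |u z| / l₁ with hB
        have hA0 : 0 ≤ A := div_nonneg hGl0 hl₁.le
        have hB0 : 0 ≤ B := div_nonneg hu0 hl₁.le
        have hAl : A * l₁ = |G z l| := div_mul_cancel₀ _ hl₁.ne'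
        have hBl : B * l₁ = |u z| := div_mul_cancel₀ _ hl₁.ne'
        have hexpr' : |G z l - (χ w * G z l + (n:ℝ)⁻¹ * u z * D)|
            ≤ 2*c*(A*l₁) + c*(B*l₁) := by rw [hAl, hBl]; exact hexpr
        have hhalf : (0:ℝ) ≤ 1/2*A + 1/2*B := by positivity
        nlinarith [mul_le_mul_of_nonneg_left hL8 hhalf,
          mul_nonneg (mul_nonneg hA0 hc0.le) hl₁.le,
          mul_nonneg (mul_nonneg hB0 hc0.le) hl₁.le]
      have hconv := (hphi z).1.2 (Set.mem_Ici.mpr (div_nonneg hGl0 hl₁.le))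
        (Set.mem_Ici.mpr (div_nonneg hu0 hl₁.le))
        (by norm_num : (0:ℝ) ≤ 1/2) (by norm_num : (0:ℝ) ≤ 1/2) (by norm_num)
      calc M z (|G z l - (χ w * G z l + (n:ℝ)⁻¹ * u z * D)| / L)
          ≤ M z (1/2 * (|G z l| / l₁) + 1/2 * (|u z| / l₁)) :=
            hmono z (by positivity) hs_le
        _ ≤ 1/2 * M z (|G z l| / l₁) + 1/2 * M z (|u z| / l₁) := by
            simpa [smul_eq_mul] using hconv
    · refine Eventually.of_forall fun z => ?_
      refine tendsto_const_nhds.congr' ?_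
      filter_upwards [hev0 z] with n hn
      simp [hn.1, hn.2, hM0]
  have hsum : Tendsto (fun n : ℕ => ∑ l : Fin N, ∫ z in Q,
      M z (|G z l - (χ ((n:ℝ)⁻¹ • z) * G z l +
        (n:ℝ)⁻¹ * u z * fderiv ℝ χ ((n:ℝ)⁻¹ • z) (0, Pi.single l 1))| / L))
      atTop (𝓝 0) := by
    have := tendsto_finset_sum Finset.univ (fun l _ => h2 l)
    simpa using this
  simpa using h1.add hsum
end

section
/- Let M be a Φ-function on Ω and c > 0. If M satisfies the balance condition: M(x,s) ≤ ϱ(|x−y|,s) M(y,s) for all x,y ∈ closure(Ω) with |x−y| ≤ 1/2, where ϱ is nondecreasing in both arguments and limsup_{ε→0⁺} ϱ(ε, cε^{−N}) < ∞ for every c > 0, then M is locally integrable: for every compact Ω' ⊂ Ω and every constant c > 0, ∫_{Ω'} M(x,c) dx < ∞. -/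
open MeasureTheory Set Filter Topology

/-- A Φ-function satisfying the balance (log-Hölder-type) condition is locally
integrable: `∫_{Ω'} M(x,c) dx < ∞` for every `c > 0` and compact `Ω' ⊆ Ω`. -/
theorem balance_implies_loc_integrable (N : ℕ) (Ω : Set (Fin N → ℝ)) (hΩ : IsOpen Ω)
    (M : (Fin N → ℝ) → ℝ → ℝ)
    (hmeas : ∀ s : ℝ, 0 ≤ s → Measurable (fun x => M x s))
    (hphi : ∀ x ∈ Ω, ConvexOn ℝ (Ici 0) (M x) ∧ M x 0 = 0 ∧
      (∀ s : ℝ, 0 < s → 0 < M x s) ∧ (∀ s : ℝ, 0 ≤ M x s) ∧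
      Tendsto (fun s => M x s / s) (𝓝[>] (0:ℝ)) (𝓝 0) ∧
      Tendsto (fun s => M x s / s) atTop atTop)
    (ϱ : ℝ → ℝ → ℝ)
    (hϱr : ∀ s, Monotone (fun r => ϱ r s)) (hϱs : ∀ r, Monotone (fun s => ϱ r s))
    (hbal : ∀ x ∈ closure Ω, ∀ y ∈ closure Ω, dist x y ≤ 1/2 →
      ∀ s : ℝ, 0 ≤ s → M x s ≤ ϱ (dist x y) s * M y s)
    (hlim : ∀ c : ℝ, 0 < c → ∃ C : ℝ, ∀ᶠ ε in 𝓝[>] (0:ℝ),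
      ϱ ε (c * ε ^ (-(N:ℝ))) ≤ C) :
    ∀ c : ℝ, 0 < c → ∀ K : Set (Fin N → ℝ), IsCompact K → K ⊆ Ω →
      IntegrableOn (fun x => M x c) K := by
  intro c hc K hK hKΩ
  rcases K.eq_empty_or_nonempty with rfl | hKne
  · simp
  have hmc : Measurable fun x => M x c := hmeas c hc.le
  obtain ⟨t, htK, hcover⟩ := hK.elim_nhds_subcover (fun y => Metric.ball y (1/2))
    (fun y _ => Metric.ball_mem_nhds y (by norm_num))
  have htne : t.Nonempty := by
    obtain ⟨x, hx⟩ := hKne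
    obtain ⟨y, hy, -⟩ : ∃ y ∈ t, x ∈ Metric.ball y (1/2) := by
      simpa using hcover hx
    exact ⟨y, hy⟩
  set C : ℝ := t.sup' htne (fun y => ϱ (1/2) c * M y c) with hC
  have hbound : ∀ x ∈ K, M x c ≤ C := by
    intro x hx
    obtain ⟨y, hyt, hxy⟩ : ∃ y ∈ t, x ∈ Metric.ball y (1/2) := by
      simpa using hcover hx
    have hyK : y ∈ K := htK y hyt
    have hxΩ : x ∈ closure Ω := subset_closure (hKΩ hx)
    have hyΩ : y ∈ closure Ω := subset_closure (hKΩ hyK)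
    have hdist : dist x y ≤ 1/2 := le_of_lt (by simpa [Metric.mem_ball] using hxy)
    have h1 := hbal x hxΩ y hyΩ hdist c hc.le
    have h2 : ϱ (dist x y) c ≤ ϱ (1/2) c := hϱr c hdist
    have hMy : 0 ≤ M y c := (hphi y (hKΩ hyK)).2.2.2.1 c
    calc M x c ≤ ϱ (dist x y) c * M y c := h1
      _ ≤ ϱ (1/2) c * M y c := mul_le_mul_of_nonneg_right h2 hMy
      _ ≤ C := Finset.le_sup' (f := fun y => ϱ (1/2) c * M y c) hyt
  apply Measure.integrableOn_of_bounded hK.measure_lt_top.ne hmc.aestronglyMeasurable (M := C)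
  filter_upwards [ae_restrict_mem hK.measurableSet] with x hx
  rw [Real.norm_eq_abs, abs_of_nonneg ((hphi x (hKΩ hx)).2.2.2.1 c)]
  exact hbound x hx
end
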